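/- (Forward preservation of the write rule.) For all vs : ℕ → var, constraint sets cs, memories s : ℕ → ℤ, and assignments asgn, if asgn satisfies cs and vs^asgn ≡ s, then for every address d : ℕ and every expression e : SExp the following holds: letting x be a variable fresh for both vs and cs, s' := s[d ↦ e^s], vs' := vs[d ↦ x], and cs' := cs ∪ {var x = e^vs}, there exists an assignment asgn' such that asgn' satisfies cs' and vs'^asgn' ≡ s'. (The witness asgn' := asgn[x ↦ e^s] works.) -/
import Mathlib


/-- Variables are natural numbers. -/
abbrev Var := ℕ

/-- Binary integer operations: +, −, ×, ÷ (integer division). -/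
inductive Op
  | add | sub | mul | div
deriving DecidableEq

def Op.denote : Op → ℤ → ℤ → ℤ
  | .add => (· + ·)
  | .sub => (· - ·)
  | .mul => (· * ·)
  | .div => (· / ·)

/-- Symbolic server expressions. -/
inductive SExp
  | const : ℤ → SExp
  | read : ℕ → SExp
  | bin : Op → SExp → SExp → SExp
deriving DecidableEq

/-- Evaluation of a server expression on a memory `s : ℕ → ℤ`, written `e^s`. -/
def SExp.eval (s : ℕ → ℤ) : SExp → ℤ
  | .const z => z
  | .read k => s k
  | .bin op e₁ e₂ => op.denote (e₁.eval s) (e₂.eval s)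

/-- Validator expressions. -/
inductive VExp
  | const : ℤ → VExp
  | var : Var → VExp
  | bin : Op → VExp → VExp → VExp
deriving DecidableEq

/-- Evaluation of a validator expression under an assignment, written `e^asgn`. -/
def VExp.eval (asgn : Var → ℤ) : VExp → ℤ
  | .const z => z
  | .var x => asgn x
  | .bin op e₁ e₂ => op.denote (e₁.eval asgn) (e₂.eval asgn)

/-- Symbolization `e^vs` of a server expression: replace every `read src` by `var (vs src)`. -/
def SExp.symb (vs : ℕ → Var) : SExp → VExp
  | .const z => .const z
  | .read k => .var (vs k)
  | .bin op e₁ e₂ => .bin op (e₁.symb vs) (e₂.symb vs)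

/-- Comparison operators for constraints: <, ≤, =. -/
inductive Cmp
  | lt | le | eq
deriving DecidableEq

def Cmp.holds : Cmp → ℤ → ℤ → Prop
  | .lt => (· < ·)
  | .le => (· ≤ ·)
  | .eq => (· = ·)

/-- A constraint is a triple of two validator expressions and a comparison. -/
structure Constraint where
  lhs : VExp
  cmp : Cmp
  rhs : VExp
deriving DecidableEq

/-- `asgn` satisfies the constraint set `cs`. -/
def Sat (asgn : Var → ℤ) (cs : Finset Constraint) : Prop :=
  ∀ c ∈ cs, c.cmp.holds (c.lhs.eval asgn) (c.rhs.eval asgn)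

/-- A variable occurs in a validator expression. -/
def VExp.occurs (x : Var) : VExp → Prop
  | .const _ => False
  | .var y => y = x
  | .bin _ e₁ e₂ => e₁.occurs x ∨ e₂.occurs x

/-- `x` is fresh for the constraint set `cs`: it occurs in no constraint of `cs`. -/
def FreshCs (x : Var) (cs : Finset Constraint) : Prop :=
  ∀ c ∈ cs, ¬ c.lhs.occurs x ∧ ¬ c.rhs.occurs x

/-- `x` is fresh for `vs : ℕ → Var`. -/
def FreshVs (x : Var) (vs : ℕ → Var) : Prop :=
  ∀ k : ℕ, vs k ≠ x

lemma VExp.eval_update_of_not_occurs (asgn : Var → ℤ) (x : Var) (v : ℤ) :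
    ∀ e : VExp, ¬ e.occurs x → e.eval (Function.update asgn x v) = e.eval asgn
  | .const _, _ => rfl
  | .var y, h => by
      simp [VExp.eval, Function.update_of_ne (fun hy => h hy)]
  | .bin op e₁ e₂, h => by
      simp only [VExp.eval,
        VExp.eval_update_of_not_occurs asgn x v e₁ (fun h1 => h (Or.inl h1)),
        VExp.eval_update_of_not_occurs asgn x v e₂ (fun h2 => h (Or.inr h2))]

lemma SExp.eval_symb (vs : ℕ → Var) (s : ℕ → ℤ) (asgn : Var → ℤ)
    (hrefl : ∀ k, asgn (vs k) = s k) :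
    ∀ e : SExp, (e.symb vs).eval asgn = e.eval s
  | .const _ => rfl
  | .read k => hrefl k
  | .bin op e₁ e₂ => by
      simp only [SExp.symb, SExp.eval, VExp.eval,
        SExp.eval_symb vs s asgn hrefl e₁, SExp.eval_symb vs s asgn hrefl e₂]

lemma SExp.symb_not_occurs (vs : ℕ → Var) (x : Var) (hx : FreshVs x vs) :
    ∀ e : SExp, ¬ (e.symb vs).occurs x
  | .const _ => fun h => h
  | .read k => hx k
  | .bin op e₁ e₂ => fun h => h.elim (SExp.symb_not_occurs vs x hx e₁)
      (SExp.symb_not_occurs vs x hx e₂)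

/-- Forward preservation of the write rule. -/
theorem write_forward_preservation
    (vs : ℕ → Var) (cs : Finset Constraint) (s : ℕ → ℤ) (asgn : Var → ℤ)
    (hsat : Sat asgn cs) (hrefl : ∀ k : ℕ, asgn (vs k) = s k)
    (d : ℕ) (e : SExp)
    (x : Var) (hxvs : FreshVs x vs) (hxcs : FreshCs x cs) :
    ∃ asgn' : Var → ℤ,
      Sat asgn' (insert ⟨VExp.var x, Cmp.eq, e.symb vs⟩ cs) ∧
      ∀ k : ℕ, asgn' (Function.update vs d x k) = Function.update s d (e.eval s) k := by
  refine ⟨Function.update asgn x (e.eval s), ?_, ?_⟩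
  · intro c hc
    rcases Finset.mem_insert.mp hc with h | h
    · subst h
      simp only [Cmp.holds, VExp.eval, Function.update_self]
      rw [VExp.eval_update_of_not_occurs asgn x (e.eval s) _
        (SExp.symb_not_occurs vs x hxvs e)]
      exact (SExp.eval_symb vs s asgn hrefl e).symm
    · obtain ⟨h1, h2⟩ := hxcs c h
      rw [VExp.eval_update_of_not_occurs asgn x _ _ h1,
        VExp.eval_update_of_not_occurs asgn x _ _ h2]
      exact hsat c h
  · intro k
    by_cases hk : k = d
    · subst hk
      rw [Function.update_self, Function.update_self, Function.update_self]
    · rw [Function.update_of_ne hk, Function.update_of_ne hk,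
        Function.update_of_ne (hxvs k), hrefl]
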